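/- arXiv:1812.04176 — 2 statements merged into one kernel-verified Lean document; each statement's English description precedes it below -/
import Mathlib

section
/- Suppose W ∈ ℝ^{n×k} satisfies the WDC with constant ε. Then for any nonzero x, y ∈ ℝ^k with θ = ∠(x, y): (i) ‖W_{+,x}^T (W_{+,x} − W_{+,y})‖ ≤ 2ε + θ in spectral norm, and (ii) ‖(W_{+,x} − W_{+,y}) y‖² ≤ 2(2ε + θ) ‖x − y‖². -/
/-!
For (i), write `W_{+,x}ᵀ (W_{+,x} - W_{+,y})` as
`(W_{+,x}ᵀ W_{+,x} - Q_{x,x}) - (W_{+,x}ᵀ W_{+,y} - Q_{x,y}) + (Q_{x,x} - Q_{x,y})`. The WDC bounds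
the first two terms by `ε`, and `Q_{x,x} - Q_{x,y} = (θ I - sin θ M_{x̂↔ŷ}) / (2π)` has norm at most
`(θ + sin θ) / (2π) ≤ θ` because `M_{x̂↔ŷ}` is a contraction.

For (ii), put `D = W_{+,x} - W_{+,y}`. A nonzero row of `D` is `±wᵢ` where `wᵢ` separates `x`
from `y`, so `(D y)ᵢ (D x)ᵢ ≤ 0` for every `i` and hence `‖D y‖ ≤ ‖D (y - x)‖`. Finally
`‖D‖² = ‖Dᵀ D‖`, and `Dᵀ D` is the sum of the matrices of (i) for `(x, y)` and for `(y, x)`.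
-/

open scoped BigOperators NNReal
open Real Finset Matrix
open scoped Matrix

noncomputable section

namespace CSGen

/-- Euclidean norm of a vector in `ℝ^m`. -/
def enorm {m : ℕ} (v : Fin m → ℝ) : ℝ := Real.sqrt (∑ i, (v i) ^ 2)

/-- Euclidean inner product. -/
def dotp {m : ℕ} (u v : Fin m → ℝ) : ℝ := ∑ i, u i * v i

/-- `relu` applied entrywise. -/
def relu {m : ℕ} (v : Fin m → ℝ) : Fin m → ℝ := fun i => max (v i) 0

/-- Zero out the rows of `W` at which the vector `v` is not positive. -/
def rowFilter {n k : ℕ} (W : Matrix (Fin n) (Fin k) ℝ) (v : Fin n → ℝ) :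
    Matrix (Fin n) (Fin k) ℝ := fun i j => if 0 < v i then W i j else 0

/-- `W_{+,x} = diag(Wx > 0) W`. -/
def posPart {n k : ℕ} (W : Matrix (Fin n) (Fin k) ℝ) (x : Fin k → ℝ) :
    Matrix (Fin n) (Fin k) ℝ := rowFilter W (W.mulVec x)

/-- Spectral norm of a matrix (operator norm w.r.t. Euclidean norms). -/
def specNorm {n k : ℕ} (M : Matrix (Fin n) (Fin k) ℝ) : ℝ :=
  ‖LinearMap.toContinuousLinearMap (Matrix.toEuclideanLin M)‖

/-- The angle `∠(x,y) = arccos(⟨x,y⟩/(‖x‖‖y‖))`. -/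
def ang {k : ℕ} (x y : Fin k → ℝ) : ℝ :=
  Real.arccos (dotp x y / (enorm x * enorm y))

/-- The matrix of the linear map `M_{x̂↔ŷ}` sending `x̂ ↦ ŷ`, `ŷ ↦ x̂`, and
`z ↦ 0` for `z ⊥ span{x,y}`. -/
def swapMat {k : ℕ} (x y : Fin k → ℝ) : Matrix (Fin k) (Fin k) ℝ :=
  let xh := (enorm x)⁻¹ • x
  let yh := (enorm y)⁻¹ • y
  let c := dotp xh yh
  if c = 1 then Matrix.vecMulVec xh xh
  else if c = -1 then -(Matrix.vecMulVec xh xh)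
  else (1 - c ^ 2)⁻¹ •
    (Matrix.vecMulVec xh yh + Matrix.vecMulVec yh xh
      - c • (Matrix.vecMulVec xh xh + Matrix.vecMulVec yh yh))

/-- The matrix `Q_{x,y}`. -/
def Qmat {k : ℕ} (x y : Fin k → ℝ) : Matrix (Fin k) (Fin k) ℝ :=
  ((π - ang x y) / (2 * π)) • (1 : Matrix (Fin k) (Fin k) ℝ)
    + (Real.sin (ang x y) / (2 * π)) • swapMat x y

/-- The Weight Distribution Condition with constant `ε`. -/
def WDC {n k : ℕ} (W : Matrix (Fin n) (Fin k) ℝ) (ε : ℝ) : Prop :=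
  ∀ x y : Fin k → ℝ, x ≠ 0 → y ≠ 0 →
    specNorm ((posPart W x)ᵀ * posPart W y - Qmat x y) ≤ ε

/-- The Range Restricted Isometry Condition of `A` with respect to `G`,
with constant `ε`. -/
def RRIC {m nd k : ℕ} (A : Matrix (Fin m) (Fin nd) ℝ)
    (G : (Fin k → ℝ) → (Fin nd → ℝ)) (ε : ℝ) : Prop :=
  ∀ x1 x2 x3 x4 : Fin k → ℝ,
    |dotp (A.mulVec (G x1 - G x2)) (A.mulVec (G x3 - G x4))
        - dotp (G x1 - G x2) (G x3 - G x4)|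
      ≤ ε * enorm (G x1 - G x2) * enorm (G x3 - G x4)

/-- Output of the `j`-th layer of the network:
`feat n W d = G = relu(W_d ⋯ relu(W_1 x) ⋯)`. -/
def feat (n : ℕ → ℕ) (W : ∀ i : ℕ, Matrix (Fin (n (i + 1))) (Fin (n i)) ℝ) :
    (j : ℕ) → (Fin (n 0) → ℝ) → (Fin (n j) → ℝ)
  | 0, x => x
  | (j + 1), x => relu ((W j).mulVec (feat n W j x))

/-- The matrix product `∏_{i=j}^{1} W_{i,+,x}`. -/
def lam (n : ℕ → ℕ) (W : ∀ i : ℕ, Matrix (Fin (n (i + 1))) (Fin (n i)) ℝ) :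
    (j : ℕ) → (Fin (n 0) → ℝ) → Matrix (Fin (n j)) (Fin (n 0)) ℝ
  | 0, _ => 1
  | (j + 1), x => rowFilter (W j) ((W j).mulVec (feat n W j x)) * lam n W j x

/-- The empirical risk `f(x) = (1/2)‖A G(x) − (A G(x_*) + e)‖²`. -/
def fobj {m : ℕ} (n : ℕ → ℕ) (W : ∀ i : ℕ, Matrix (Fin (n (i + 1))) (Fin (n i)) ℝ)
    (d : ℕ) (A : Matrix (Fin m) (Fin (n d)) ℝ) (xs : Fin (n 0) → ℝ) (e : Fin m → ℝ)
    (x : Fin (n 0) → ℝ) : ℝ :=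
  (1 / 2) * (enorm (A.mulVec (feat n W d x) - (A.mulVec (feat n W d xs) + e))) ^ 2

/-- `ṽ_x = (∏ W_{i,+,x})ᵀ Aᵀ (A (∏ W_{i,+,x}) x − y)`. -/
def vtil {m : ℕ} (n : ℕ → ℕ) (W : ∀ i : ℕ, Matrix (Fin (n (i + 1))) (Fin (n i)) ℝ)
    (d : ℕ) (A : Matrix (Fin m) (Fin (n d)) ℝ) (xs : Fin (n 0) → ℝ) (e : Fin m → ℝ)
    (x : Fin (n 0) → ℝ) : Fin (n 0) → ℝ :=
  Matrix.mulVec (lam n W d x)ᵀ (Matrix.mulVec Aᵀ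
    (A.mulVec ((lam n W d x).mulVec x) - (A.mulVec (feat n W d xs) + e)))

/-- `g(θ) = arccos((1/π)[(π−θ)cos θ + sin θ])`. -/
def gfun (θ : ℝ) : ℝ := Real.arccos ((1 / π) * ((π - θ) * Real.cos θ + Real.sin θ))

/-- `θ̄_{i,x,y}`. -/
def thetaBar {k : ℕ} (x y : Fin k → ℝ) : ℕ → ℝ
  | 0 => ang x y
  | (i + 1) => gfun (thetaBar x y i)

/-- `h̃_{x,y}` for a `d`-layer network. -/
def htil {k : ℕ} (d : ℕ) (x y : Fin k → ℝ) : Fin k → ℝ :=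
  (((2 : ℝ) ^ d)⁻¹ * ∏ i ∈ Finset.range d, (π - thetaBar x y i) / π) • y
    + (((2 : ℝ) ^ d)⁻¹ * ∑ i ∈ Finset.range d, (Real.sin (thetaBar x y i) / π)
        * ∏ j ∈ Finset.Ico (i + 1) d, (π - thetaBar x y j) / π) •
        (enorm y • (enorm x)⁻¹ • x)

/-- `h_{x,y} = 2^{−d} x − h̃_{x,y}`. -/
def hfun {k : ℕ} (d : ℕ) (x y : Fin k → ℝ) : Fin k → ℝ :=
  ((2 : ℝ) ^ d)⁻¹ • x - htil d x y

/-- `θ̌_i` with `θ̌_0 = π`. -/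
def thetaCheck : ℕ → ℝ
  | 0 => π
  | (i + 1) => gfun (thetaCheck i)

/-- `ρ_d`. -/
def rho (d : ℕ) : ℝ :=
  ∑ i ∈ Finset.range d, (Real.sin (thetaCheck i) / π)
    * ∏ j ∈ Finset.Ico (i + 1) d, (π - thetaCheck j) / π

/-- The expected risk `f^E`. -/
def fE {k : ℕ} (d : ℕ) (xs : Fin k → ℝ) (x : Fin k → ℝ) : ℝ :=
  ((2 : ℝ) ^ (d + 1))⁻¹ * dotp x x - dotp x (htil d x xs)
    + ((2 : ℝ) ^ (d + 1))⁻¹ * dotp xs xs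

/-- Closed ball of radius `r` about `z` in the Euclidean norm. -/
def cball {k : ℕ} (z : Fin k → ℝ) (r : ℝ) : Set (Fin k → ℝ) :=
  {x | enorm (x - z) ≤ r}

/-- The set `S_β`. -/
def Sset {k : ℕ} (d : ℕ) (xs : Fin k → ℝ) (β : ℝ) : Set (Fin k → ℝ) :=
  {x | x ≠ 0 ∧ enorm (hfun d x xs) ≤ ((2 : ℝ) ^ d)⁻¹ * β * max (enorm x) (enorm xs)}

open scoped Matrix.Norms.L2Operator RealInnerProductSpace

lemma enorm_eq_norm_toLp {m : ℕ} (v : Fin m → ℝ) :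
    enorm v = ‖(WithLp.toLp 2 v : EuclideanSpace ℝ (Fin m))‖ := by
  simp [enorm, EuclideanSpace.norm_eq]

lemma dotp_eq_inner_toLp {m : ℕ} (u v : Fin m → ℝ) :
    dotp u v = ⟪(WithLp.toLp 2 u : EuclideanSpace ℝ (Fin m)), WithLp.toLp 2 v⟫ := by
  simp [dotp, EuclideanSpace.inner_toLp_toLp, dotProduct, mul_comm]

lemma specNorm_eq_l2_opNorm {n k : ℕ} (M : Matrix (Fin n) (Fin k) ℝ) :
    specNorm M = ‖M‖ := rfl

lemma norm_toLp_mulVec_le {n k : ℕ} (M : Matrix (Fin n) (Fin k) ℝ) (v : Fin k → ℝ) :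
    ‖(WithLp.toLp 2 (M *ᵥ v) : EuclideanSpace ℝ (Fin n))‖
      ≤ ‖M‖ * ‖(WithLp.toLp 2 v : EuclideanSpace ℝ (Fin k))‖ :=
  M.l2_opNorm_mulVec (WithLp.toLp 2 v)

lemma l2_opNorm_le_of_mulVec {n k : ℕ} (M : Matrix (Fin n) (Fin k) ℝ) {C : ℝ} (hC : 0 ≤ C)
    (h : ∀ v : Fin k → ℝ, ‖(WithLp.toLp 2 (M *ᵥ v) : EuclideanSpace ℝ (Fin n))‖
      ≤ C * ‖(WithLp.toLp 2 v : EuclideanSpace ℝ (Fin k))‖) : ‖M‖ ≤ C :=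
  ContinuousLinearMap.opNorm_le_bound _ hC fun v => h v.ofLp

lemma l2_opNorm_one_le {k : ℕ} : ‖(1 : Matrix (Fin k) (Fin k) ℝ)‖ ≤ 1 :=
  l2_opNorm_le_of_mulVec _ zero_le_one fun v => by rw [one_mulVec, one_mul]

section SwapContraction

variable {E : Type*} [NormedAddCommGroup E] [InnerProductSpace ℝ E]

lemma norm_inner_smul_le {a : E} (ha : ‖a‖ = 1) (z : E) : ‖⟪a, z⟫ • a‖ ≤ ‖z‖ := by
  simpa [norm_smul, ha] using abs_real_inner_le_norm a z

lemma norm_smul_add_smul_sq {a b : E} (ha : ‖a‖ = 1) (hb : ‖b‖ = 1) (α β : ℝ) :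
    ‖α • a + β • b‖ ^ 2 = α ^ 2 + β ^ 2 + 2 * α * β * ⟪a, b⟫ := by
  rw [norm_add_sq_real, norm_smul, norm_smul, inner_smul_left, inner_smul_right, ha, hb,
    Real.norm_eq_abs, Real.norm_eq_abs, conj_trivial]
  simp only [mul_one, sq_abs]
  ring

/- The map is `M_{a↔b}` after the orthogonal projection onto `span {a, b}`: swapping the two
coefficients of a vector of that plane preserves its norm, and projecting does not increase it. -/
lemma norm_swap_le {a b : E} (ha : ‖a‖ = 1) (hb : ‖b‖ = 1) (hab : ⟪a, b⟫ ^ 2 ≠ 1) (z : E) :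
    ‖(1 - ⟪a, b⟫ ^ 2)⁻¹ • (⟪b, z⟫ • a + ⟪a, z⟫ • b - ⟪a, b⟫ • (⟪a, z⟫ • a + ⟪b, z⟫ • b))‖
      ≤ ‖z‖ := by
  set c := ⟪a, b⟫
  set A := ⟪a, z⟫
  set B := ⟪b, z⟫
  have hd : 1 - c ^ 2 ≠ 0 := sub_ne_zero.2 (Ne.symm hab)
  set α := (1 - c ^ 2)⁻¹ * (B - c * A)
  set β := (1 - c ^ 2)⁻¹ * (A - c * B)
  have hp : (1 - c ^ 2)⁻¹ • (B • a + A • b - c • (A • a + B • b)) = α • a + β • b := by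
    module
  have hαβ : α + β * c = B := by simp only [α, β]; field_simp; ring
  have hβα : β + α * c = A := by simp only [α, β]; field_simp; ring
  clear_value α β
  have hq : ‖β • a + α • b‖ ^ 2 = ⟪β • a + α • b, z⟫ := by
    rw [norm_smul_add_smul_sq ha hb, inner_add_left, inner_smul_left, inner_smul_left]
    simp only [conj_trivial]
    linear_combination β * hβα + α * hαβ
  have hqz : ‖β • a + α • b‖ ≤ ‖z‖ := by
    have := real_inner_le_norm (β • a + α • b) z
    nlinarith [norm_nonneg (β • a + α • b), norm_nonneg z]
  have hpq : ‖α • a + β • b‖ = ‖β • a + α • b‖ := by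
    rw [← sq_eq_sq₀ (norm_nonneg _) (norm_nonneg _), norm_smul_add_smul_sq ha hb,
      norm_smul_add_smul_sq ha hb]
    ring
  rw [hp, hpq]
  exact hqz

end SwapContraction

lemma toLp_vecMulVec_mulVec {m : ℕ} (u v z : Fin m → ℝ) :
    (WithLp.toLp 2 (vecMulVec u v *ᵥ z) : EuclideanSpace ℝ (Fin m))
      = ⟪WithLp.toLp 2 v, WithLp.toLp 2 z⟫ • WithLp.toLp 2 u := by
  rw [vecMulVec_mulVec, op_smul_eq_smul, WithLp.toLp_smul, ← dotp_eq_inner_toLp]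
  rfl

lemma norm_toLp_normalize {m : ℕ} {v : Fin m → ℝ} (hv : v ≠ 0) :
    ‖(WithLp.toLp 2 ((enorm v)⁻¹ • v) : EuclideanSpace ℝ (Fin m))‖ = 1 := by
  have hv' : (WithLp.toLp 2 v : EuclideanSpace ℝ (Fin m)) ≠ 0 := by simpa using hv
  rw [WithLp.toLp_smul, enorm_eq_norm_toLp, norm_smul, norm_inv, norm_norm,
    inv_mul_cancel₀ (norm_ne_zero_iff.2 hv')]

lemma norm_swapMat_le_one {k : ℕ} {x y : Fin k → ℝ} (hx : x ≠ 0) (hy : y ≠ 0) :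
    ‖swapMat x y‖ ≤ 1 := by
  refine l2_opNorm_le_of_mulVec _ zero_le_one fun z => ?_
  have ha := norm_toLp_normalize hx
  have hb := norm_toLp_normalize hy
  rw [one_mul, swapMat]
  simp only [dotp_eq_inner_toLp]
  split_ifs with h1 h2
  · rw [toLp_vecMulVec_mulVec]
    exact norm_inner_smul_le ha _
  · rw [neg_mulVec, WithLp.toLp_neg, norm_neg, toLp_vecMulVec_mulVec]
    exact norm_inner_smul_le ha _
  · have hab : ⟪WithLp.toLp 2 ((enorm x)⁻¹ • x), WithLp.toLp 2 ((enorm y)⁻¹ • y)⟫ ^ 2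
        ≠ (1 : ℝ) := by
      rw [Ne, sq_eq_one_iff, not_or]
      exact ⟨h1, h2⟩
    simp only [smul_mulVec, add_mulVec, sub_mulVec, WithLp.toLp_add, WithLp.toLp_sub,
      WithLp.toLp_smul, toLp_vecMulVec_mulVec]
    exact norm_swap_le ha hb hab _

lemma ang_comm {k : ℕ} (x y : Fin k → ℝ) : ang x y = ang y x := by
  rw [ang, ang, dotp_eq_inner_toLp, dotp_eq_inner_toLp, real_inner_comm, mul_comm (enorm x)]

lemma ang_self {k : ℕ} {x : Fin k → ℝ} (hx : x ≠ 0) : ang x x = 0 := by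
  have hx' : (WithLp.toLp 2 x : EuclideanSpace ℝ (Fin k)) ≠ 0 := by simpa using hx
  rw [ang, dotp_eq_inner_toLp, enorm_eq_norm_toLp, real_inner_self_eq_norm_mul_norm,
    div_self (by positivity), Real.arccos_one]

lemma norm_Qmat_self_sub_le {k : ℕ} {x y : Fin k → ℝ} (hx : x ≠ 0) (hy : y ≠ 0) :
    ‖Qmat x x - Qmat x y‖ ≤ ang x y := by
  set θ := ang x y
  have hθ0 : 0 ≤ θ := Real.arccos_nonneg _
  have hθπ : θ ≤ π := Real.arccos_le_pi _
  have hsin : 0 ≤ Real.sin θ := Real.sin_nonneg_of_nonneg_of_le_pi hθ0 hθπ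
  have hQ : Qmat x x - Qmat x y
      = (θ / (2 * π)) • (1 : Matrix (Fin k) (Fin k) ℝ)
        - (Real.sin θ / (2 * π)) • swapMat x y := by
    simp only [Qmat, ang_self hx, Real.sin_zero, zero_div, zero_smul, add_zero, sub_zero]
    module
  calc ‖Qmat x x - Qmat x y‖
      ≤ θ / (2 * π) * ‖(1 : Matrix (Fin k) (Fin k) ℝ)‖
          + Real.sin θ / (2 * π) * ‖swapMat x y‖ := by
        rw [hQ]
        refine (norm_sub_le _ _).trans_eq ?_
        rw [norm_smul, norm_smul, Real.norm_of_nonneg (by positivity),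
          Real.norm_of_nonneg (by positivity)]
    _ ≤ θ / (2 * π) * 1 + Real.sin θ / (2 * π) * 1 := by
        gcongr
        exacts [l2_opNorm_one_le, norm_swapMat_le_one hx hy]
    _ ≤ θ := by
        rw [mul_one, mul_one, ← add_div, div_le_iff₀ (by positivity)]
        nlinarith [Real.sin_le hθ0, Real.pi_gt_three]

lemma WDC.norm_posPart_transpose_mul_sub_le {n k : ℕ} {W : Matrix (Fin n) (Fin k) ℝ} {ε : ℝ}
    (hW : WDC W ε) {x y : Fin k → ℝ} (hx : x ≠ 0) (hy : y ≠ 0) :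
    ‖(posPart W x)ᵀ * (posPart W x - posPart W y)‖ ≤ 2 * ε + ang x y := by
  have hxx := hW x x hx hx
  have hxy := hW x y hx hy
  rw [specNorm_eq_l2_opNorm] at hxx hxy
  have hsplit : (posPart W x)ᵀ * (posPart W x - posPart W y)
      = ((posPart W x)ᵀ * posPart W x - Qmat x x)
        - ((posPart W x)ᵀ * posPart W y - Qmat x y) + (Qmat x x - Qmat x y) := by
    rw [Matrix.mul_sub]; abel
  rw [hsplit]
  linarith [norm_add_le_of_le (norm_sub_le_of_le hxx hxy) (norm_Qmat_self_sub_le hx hy)]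

lemma rowFilter_mulVec_apply {n k : ℕ} (W : Matrix (Fin n) (Fin k) ℝ) (u : Fin n → ℝ)
    (v : Fin k → ℝ) (i : Fin n) :
    (rowFilter W u *ᵥ v) i = if 0 < u i then (W *ᵥ v) i else 0 := by
  simp only [rowFilter, mulVec, dotProduct]
  split_ifs <;> simp

lemma posPart_sub_mulVec_mul_nonpos {n k : ℕ} (W : Matrix (Fin n) (Fin k) ℝ)
    (x y : Fin k → ℝ) (i : Fin n) :
    ((posPart W x - posPart W y) *ᵥ y) i * ((posPart W x - posPart W y) *ᵥ x) i ≤ 0 := by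
  simp only [sub_mulVec, Pi.sub_apply, posPart, rowFilter_mulVec_apply]
  split_ifs <;> nlinarith

lemma enorm_le_enorm_sub_of_mul_nonpos {m : ℕ} {u v : Fin m → ℝ} (h : ∀ i, u i * v i ≤ 0) :
    enorm u ≤ enorm (u - v) :=
  Real.sqrt_le_sqrt <| Finset.sum_le_sum fun i _ => by
    rw [Pi.sub_apply]
    nlinarith [h i, sq_nonneg (v i)]

lemma WDC.norm_posPart_sub_transpose_mul_self_le {n k : ℕ} {W : Matrix (Fin n) (Fin k) ℝ}
    {ε : ℝ} (hW : WDC W ε) {x y : Fin k → ℝ} (hx : x ≠ 0) (hy : y ≠ 0) :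
    ‖(posPart W x - posPart W y)ᵀ * (posPart W x - posPart W y)‖ ≤ 2 * (2 * ε + ang x y) := by
  have hsplit : (posPart W x - posPart W y)ᵀ * (posPart W x - posPart W y)
      = (posPart W x)ᵀ * (posPart W x - posPart W y)
        + (posPart W y)ᵀ * (posPart W y - posPart W x) := by
    simp only [transpose_sub, Matrix.sub_mul, Matrix.mul_sub]; abel
  have hyx := hW.norm_posPart_transpose_mul_sub_le hy hx
  rw [ang_comm] at hyx
  rw [hsplit]
  linarith [norm_add_le_of_le (hW.norm_posPart_transpose_mul_sub_le hx hy) hyx]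

lemma enorm_mulVec_sq_le {n k : ℕ} (D : Matrix (Fin n) (Fin k) ℝ) (v : Fin k → ℝ) :
    enorm (D *ᵥ v) ^ 2 ≤ ‖Dᵀ * D‖ * enorm v ^ 2 := by
  rw [← conjTranspose_eq_transpose_of_trivial, l2_opNorm_conjTranspose_mul_self,
    enorm_eq_norm_toLp, enorm_eq_norm_toLp, ← sq, ← mul_pow]
  exact pow_le_pow_left₀ (norm_nonneg _) (norm_toLp_mulVec_le D v) 2

lemma WDC.enorm_posPart_sub_mulVec_sq_le {n k : ℕ} {W : Matrix (Fin n) (Fin k) ℝ} {ε : ℝ}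
    (hW : WDC W ε) {x y : Fin k → ℝ} (hx : x ≠ 0) (hy : y ≠ 0) :
    enorm ((posPart W x - posPart W y) *ᵥ y) ^ 2
      ≤ 2 * (2 * ε + ang x y) * enorm (x - y) ^ 2 := by
  set D := posPart W x - posPart W y
  have hDy : enorm (D *ᵥ y) ≤ enorm (D *ᵥ (y - x)) := by
    rw [mulVec_sub]
    exact enorm_le_enorm_sub_of_mul_nonpos (posPart_sub_mulVec_mul_nonpos W x y)
  calc enorm (D *ᵥ y) ^ 2 ≤ enorm (D *ᵥ (y - x)) ^ 2 :=
        pow_le_pow_left₀ (Real.sqrt_nonneg _) hDy 2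
    _ ≤ ‖Dᵀ * D‖ * enorm (y - x) ^ 2 := enorm_mulVec_sq_le D (y - x)
    _ ≤ 2 * (2 * ε + ang x y) * enorm (x - y) ^ 2 := by
        rw [enorm_eq_norm_toLp, enorm_eq_norm_toLp, WithLp.toLp_sub, WithLp.toLp_sub,
          norm_sub_rev]
        gcongr
        exact hW.norm_posPart_sub_transpose_mul_self_le hx hy

theorem statement_16 (n k : ℕ) (W : Matrix (Fin n) (Fin k) ℝ) (ε : ℝ)
    (hW : WDC W ε) :
    ∀ x y : Fin k → ℝ, x ≠ 0 → y ≠ 0 →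
      specNorm ((posPart W x)ᵀ * (posPart W x - posPart W y)) ≤ 2 * ε + ang x y
      ∧ enorm ((posPart W x - posPart W y).mulVec y) ^ 2
          ≤ 2 * (2 * ε + ang x y) * enorm (x - y) ^ 2 := by
  intro x y hx hy
  rw [specNorm_eq_l2_opNorm]
  exact ⟨hW.norm_posPart_transpose_mul_sub_le hx hy, hW.enorm_posPart_sub_mulVec_sq_le hx hy⟩

end CSGen
end
end

section
/- There is a universal constant a1 > 0 such that the following holds. Suppose each weight matrix W_i satisfies the WDC with constant ε, A satisfies the RRIC with respect to G with constant ε, ε ≤ 1/(16πd²)², and ‖ṽ_x − h_x‖ ≤ a1 (d³√ε/2^d) max(‖x‖, ‖x_*‖) + (2/2^(d/2)) ‖e‖ for every nonzero x at which G is differentiable. Set β = 4 a1 d³ √ε + 26 ‖e‖ 2^(d/2)/‖x_*‖. Then for every nonzero x ∉ S_β at which G is differentiable, ‖ṽ_x‖ ≥ 2^{−d} max(‖x‖, ‖x_*‖) (3 a1 d³ √ε + 24 ‖e‖ 2^(d/2)/‖x_*‖) ≥ 3 a1 d³ √ε · 2^{−d} · ‖x_*‖. -/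
open scoped BigOperators NNReal
open Real Finset Matrix
open scoped Matrix

noncomputable section

namespace CSGen

lemma enorm_eq_norm {m : ℕ} (v : Fin m → ℝ) :
    enorm v = ‖(WithLp.equiv 2 (Fin m → ℝ)).symm v‖ := by
  rw [EuclideanSpace.norm_eq]
  simp [enorm, Real.norm_eq_abs, sq_abs]

lemma enorm_nonneg' {m : ℕ} (v : Fin m → ℝ) : 0 ≤ enorm v :=
  Real.sqrt_nonneg _

lemma enorm_pos {m : ℕ} (v : Fin m → ℝ) (h : v ≠ 0) : 0 < enorm v := by
  rw [enorm_eq_norm]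
  have : (WithLp.equiv 2 (Fin m → ℝ)).symm v ≠ 0 := by
    simpa using h
  exact norm_pos_iff.mpr this

lemma enorm_tri {m : ℕ} (u v : Fin m → ℝ) :
    enorm u ≤ enorm v + enorm (v - u) := by
  rw [enorm_eq_norm, enorm_eq_norm, enorm_eq_norm]
  have hsub : (WithLp.equiv 2 (Fin m → ℝ)).symm (v - u)
      = (WithLp.equiv 2 (Fin m → ℝ)).symm v - (WithLp.equiv 2 (Fin m → ℝ)).symm u := rfl
  rw [hsub]
  calc ‖(WithLp.equiv 2 (Fin m → ℝ)).symm u‖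
      = ‖(WithLp.equiv 2 (Fin m → ℝ)).symm v
          - ((WithLp.equiv 2 (Fin m → ℝ)).symm v - (WithLp.equiv 2 (Fin m → ℝ)).symm u)‖ := by
        rw [sub_sub_cancel]
    _ ≤ _ := norm_sub_le _ _

theorem statement_19 :
    ∃ a1 : ℝ, 0 < a1 ∧
      ∀ (d : ℕ), 2 ≤ d → ∀ (n : ℕ → ℕ) (m : ℕ)
        (W : ∀ i : ℕ, Matrix (Fin (n (i + 1))) (Fin (n i)) ℝ)
        (A : Matrix (Fin m) (Fin (n d)) ℝ)
        (xs : Fin (n 0) → ℝ), xs ≠ 0 → ∀ (e : Fin m → ℝ) (ε : ℝ),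
        (∀ i < d, WDC (W i) ε) → RRIC A (feat n W d) ε →
        ε ≤ (1 / (16 * π * (d : ℝ) ^ 2)) ^ 2 →
        (∀ x : Fin (n 0) → ℝ, x ≠ 0 → DifferentiableAt ℝ (feat n W d) x →
          enorm (vtil n W d A xs e x - hfun d x xs)
            ≤ a1 * ((d : ℝ) ^ 3 * Real.sqrt ε / 2 ^ d) * max (enorm x) (enorm xs)
              + (2 / (2 : ℝ) ^ ((d : ℝ) / 2)) * enorm e) →
        ∀ x : Fin (n 0) → ℝ, x ≠ 0 → DifferentiableAt ℝ (feat n W d) x →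
          x ∉ Sset d xs (4 * a1 * (d : ℝ) ^ 3 * Real.sqrt ε
              + 26 * enorm e * (2 : ℝ) ^ ((d : ℝ) / 2) / enorm xs) →
          ((2 : ℝ) ^ d)⁻¹ * max (enorm x) (enorm xs)
              * (3 * a1 * (d : ℝ) ^ 3 * Real.sqrt ε
                  + 24 * enorm e * (2 : ℝ) ^ ((d : ℝ) / 2) / enorm xs)
            ≤ enorm (vtil n W d A xs e x)
          ∧ 3 * a1 * (d : ℝ) ^ 3 * Real.sqrt ε * ((2 : ℝ) ^ d)⁻¹ * enorm xs
            ≤ ((2 : ℝ) ^ d)⁻¹ * max (enorm x) (enorm xs)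
              * (3 * a1 * (d : ℝ) ^ 3 * Real.sqrt ε
                  + 24 * enorm e * (2 : ℝ) ^ ((d : ℝ) / 2) / enorm xs) := by
  refine ⟨1, one_pos, ?_⟩
  intro d hd n m W A xs hxs e ε hWDC hRRIC hε hv x hx hdiff hS
  set X : ℝ := (2 : ℝ) ^ ((d : ℝ) / 2) with hXdef
  set P : ℝ := (2 : ℝ) ^ d with hPdef
  set c : ℝ := enorm e with hcdef
  set ns : ℝ := enorm xs with hnsdef
  set M : ℝ := max (enorm x) ns with hMdef
  set s : ℝ := (d : ℝ) ^ 3 * Real.sqrt ε with hsdef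
  have hX : 0 < X := Real.rpow_pos_of_pos two_pos _
  have hP : 0 < P := pow_pos two_pos d
  have hPX : X * X = P := by
    rw [hXdef, hPdef, ← Real.rpow_natCast 2 d, ← Real.rpow_add two_pos]
    congr 1
    ring
  have hns : 0 < ns := enorm_pos xs hxs
  have hMns : ns ≤ M := le_max_right _ _
  have hM : 0 < M := lt_of_lt_of_le hns hMns
  have hc : 0 ≤ c := enorm_nonneg' e
  have hs : 0 ≤ s := mul_nonneg (by positivity) (Real.sqrt_nonneg _)
  -- from x ∉ Sset
  have hlow : P⁻¹ * (4 * 1 * (d : ℝ) ^ 3 * Real.sqrt ε + 26 * c * X / ns) * M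
      < enorm (hfun d x xs) := by
    by_contra hcon
    push_neg at hcon
    exact hS ⟨hx, hcon⟩
  -- triangle inequality
  have htri : enorm (hfun d x xs)
      ≤ enorm (vtil n W d A xs e x) + enorm (vtil n W d A xs e x - hfun d x xs) :=
    enorm_tri _ _
  have hv' := hv x hx hdiff
  -- key estimate : 2 / X * c ≤ P⁻¹ * M * (2 * c * X / ns)
  have hkey : 2 / X * c ≤ P⁻¹ * M * (2 * c * X / ns) := by
    have h1 : 2 / X * c = 2 * c * X / P := by
      rw [← hPX]
      field_simp
    have h2 : P⁻¹ * M * (2 * c * X / ns) = 2 * c * X / P * (M / ns) := by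
      field_simp
    rw [h1, h2]
    have h3 : (1 : ℝ) ≤ M / ns := (one_le_div hns).mpr hMns
    have h4 : 0 ≤ 2 * c * X / P := by positivity
    calc 2 * c * X / P = 2 * c * X / P * 1 := by ring
      _ ≤ 2 * c * X / P * (M / ns) := by
          exact mul_le_mul_of_nonneg_left h3 h4
  have hmain : P⁻¹ * M * (3 * 1 * (d : ℝ) ^ 3 * Real.sqrt ε + 24 * c * X / ns)
      ≤ enorm (vtil n W d A xs e x) := by
    have hexp : P⁻¹ * (4 * 1 * (d : ℝ) ^ 3 * Real.sqrt ε + 26 * c * X / ns) * M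
        = P⁻¹ * M * (3 * 1 * (d : ℝ) ^ 3 * Real.sqrt ε + 24 * c * X / ns)
          + (1 * ((d : ℝ) ^ 3 * Real.sqrt ε / P) * M + P⁻¹ * M * (2 * c * X / ns)) := by
      ring
    have hv'' : enorm (vtil n W d A xs e x - hfun d x xs)
        ≤ 1 * ((d : ℝ) ^ 3 * Real.sqrt ε / P) * M + 2 / X * c := by
      calc enorm (vtil n W d A xs e x - hfun d x xs)
          ≤ 1 * ((d : ℝ) ^ 3 * Real.sqrt ε / 2 ^ d) * max (enorm x) (enorm xs)
            + (2 / (2 : ℝ) ^ ((d : ℝ) / 2)) * enorm e := hv'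
        _ = 1 * ((d : ℝ) ^ 3 * Real.sqrt ε / P) * M + 2 / X * c := by
            rw [hPdef, hXdef, hMdef, hcdef, hnsdef]
    linarith
  constructor
  · exact hmain
  · have h24 : 0 ≤ 24 * c * X / ns := by positivity
    have h1 : 3 * 1 * (d : ℝ) ^ 3 * Real.sqrt ε * P⁻¹ * ns
        ≤ P⁻¹ * M * (3 * 1 * (d : ℝ) ^ 3 * Real.sqrt ε) := by
      have : 3 * 1 * (d : ℝ) ^ 3 * Real.sqrt ε * P⁻¹ * ns
          ≤ 3 * 1 * (d : ℝ) ^ 3 * Real.sqrt ε * P⁻¹ * M := by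
        apply mul_le_mul_of_nonneg_left hMns
        positivity
      linarith [this]
    have h2 : 0 ≤ P⁻¹ * M * (24 * c * X / ns) := by positivity
    calc 3 * 1 * (d : ℝ) ^ 3 * Real.sqrt ε * P⁻¹ * ns
        ≤ P⁻¹ * M * (3 * 1 * (d : ℝ) ^ 3 * Real.sqrt ε) + P⁻¹ * M * (24 * c * X / ns) := by
          linarith
      _ = P⁻¹ * M * (3 * 1 * (d : ℝ) ^ 3 * Real.sqrt ε + 24 * c * X / ns) := by ring

end CSGen
end
end
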